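/- (Lemma B.3, Huang et al.) Let D be a survival dataset of size n ≥ 2 satisfying the covariate bound C_Z for some C_Z > 0. For every β, b ∈ ℝ^d, with η_b := sup_{t ∈ [0,1]} max_{i,j ∈ [n]} |bᵀ(Z_i(t) − Z_j(t))| (which is finite and at most 2 C_Z ‖b‖₂), one has e^{−η_b} · bᵀ H(β;D) b ≤ bᵀ (ℓ̇(β;D) − ℓ̇(β+b;D)) ≤ e^{η_b} · bᵀ H(β;D) b. Moreover, in the Loewner order, e^{−2η_b} H(β;D) ⪯ H(β+b;D) ⪯ e^{2η_b} H(β;D). -/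

import Mathlib

open scoped BigOperators
open MeasureTheory Real
open scoped RealInnerProductSpace
noncomputable section

structure SurvData (n d : ℕ) where
  T : Fin n → ℝ
  Δ : Fin n → Bool
  Z : Fin n → ℝ → EuclideanSpace ℝ (Fin d)

namespace SurvData

variable {n d : ℕ}

/-- Observed times lie in `[0,1]`. -/
def valid (D : SurvData n d) : Prop := ∀ i, D.T i ∈ Set.Icc (0 : ℝ) 1

/-- Covariate bound: `‖Z_i(t)‖₂ ≤ C_Z` for all `i` and all `t ∈ [0,1]`. -/
def covBound (D : SurvData n d) (CZ : ℝ) : Prop :=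
  ∀ i, ∀ t ∈ Set.Icc (0 : ℝ) 1, ‖D.Z i t‖ ≤ CZ

def S0 (D : SurvData n d) (β : EuclideanSpace ℝ (Fin d)) (t : ℝ) : ℝ :=
  (n : ℝ)⁻¹ * ∑ j, if t ≤ D.T j then Real.exp ⟪β, D.Z j t⟫ else 0

def S1 (D : SurvData n d) (β : EuclideanSpace ℝ (Fin d)) (t : ℝ) :
    EuclideanSpace ℝ (Fin d) :=
  (n : ℝ)⁻¹ • ∑ j, if t ≤ D.T j then Real.exp ⟪β, D.Z j t⟫ • D.Z j t else 0

def Zbar (D : SurvData n d) (β : EuclideanSpace ℝ (Fin d)) (t : ℝ) :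
    EuclideanSpace ℝ (Fin d) :=
  (D.S0 β t)⁻¹ • D.S1 β t

/-- The Cox partial-likelihood score `ℓ̇(β; D)`. -/
def score (D : SurvData n d) (β : EuclideanSpace ℝ (Fin d)) :
    EuclideanSpace ℝ (Fin d) :=
  (n : ℝ)⁻¹ • ∑ i, if D.Δ i then D.Z i (D.T i) - D.Zbar β (D.T i) else 0

/-- Neighbouring datasets: they differ in at most one triple. -/
def Neighbor (D D' : SurvData n d) : Prop :=
  ∃ i0 : Fin n, ∀ i, i ≠ i0 → D.T i = D'.T i ∧ D.Δ i = D'.Δ i ∧ D.Z i = D'.Z i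

def S2mat (D : SurvData n d) (β : EuclideanSpace ℝ (Fin d)) (t : ℝ) :
    Matrix (Fin d) (Fin d) ℝ :=
  (n : ℝ)⁻¹ • ∑ j, if t ≤ D.T j then
    Real.exp ⟪β, D.Z j t⟫ • Matrix.of (fun k l => D.Z j t k * D.Z j t l) else 0

def Vmat (D : SurvData n d) (β : EuclideanSpace ℝ (Fin d)) (t : ℝ) :
    Matrix (Fin d) (Fin d) ℝ :=
  (D.S0 β t)⁻¹ • D.S2mat β t - Matrix.of (fun k l => D.Zbar β t k * D.Zbar β t l)

/-- The information matrix `H(β; D)`, i.e. minus the Hessian of the log partial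
likelihood. -/
def infoMat (D : SurvData n d) (β : EuclideanSpace ℝ (Fin d)) :
    Matrix (Fin d) (Fin d) ℝ :=
  (n : ℝ)⁻¹ • ∑ i, if D.Δ i then D.Vmat β (D.T i) else 0

end SurvData

/-- The quadratic form `bᵀ M b`. -/
def quadForm {d : ℕ} (M : Matrix (Fin d) (Fin d) ℝ) (b : EuclideanSpace ℝ (Fin d)) : ℝ :=
  ∑ k, ∑ l, b k * M k l * b l

/-!
At a time `t`, `Z̄(t, β)` and `V(t, β)` are the mean and the covariance of the covariates under
the at-risk weights `a_j = 1{T_j ≥ t} e^{βᵀZ_j(t)}`, and replacing `β` by `β + b` tilts these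
weights by `e^{x_j}` with `x_j = bᵀZ_j(t)`, numbers that lie within `η_b` of each other.
Weighted variances and differences of weighted means are pair sums
`Σ_{j,k} a_j a_k (f_j - f_k)(g_j - g_k)` over the normalising sums, and the tilt changes every
pair term by a factor in `[e^{-η_b}, e^{η_b}]` (for `bᵀ(Z̄(β+b) - Z̄(β))`, using
`e^{min(u,v)} (u-v)² ≤ (e^u - e^v)(u-v) ≤ e^{max(u,v)} (u-v)²`) or in `[e^{-2η_b}, e^{2η_b}]`
(for the variance). Averaging over the event times gives the bounds on the score and on `H`.
-/

section WeightedStatistics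

variable {ι : Type*} [Fintype ι]

def wMean (w f : ι → ℝ) : ℝ := (∑ i, w i * f i) / ∑ i, w i

def wVar (w f : ι → ℝ) : ℝ := (∑ i, w i * f i ^ 2) / (∑ i, w i) - wMean w f ^ 2

theorem sum_sum_mul_mul_sub_mul_sub (w f g : ι → ℝ) :
    ∑ j, ∑ k, w j * w k * ((f j - f k) * (g j - g k)) =
      2 * ((∑ j, w j * (f j * g j)) * (∑ j, w j) - (∑ j, w j * f j) * ∑ j, w j * g j) := by
  have expand : ∀ j k, w j * w k * ((f j - f k) * (g j - g k)) =
      w j * (f j * g j) * w k + w j * (w k * (f k * g k))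
        - w j * f j * (w k * g k) - w j * g j * (w k * f k) := fun j k => by ring
  simp only [expand, Finset.sum_add_distrib, Finset.sum_sub_distrib, ← Finset.mul_sum,
    ← Finset.sum_mul]
  ring

theorem wVar_eq_sum_sum {w : ι → ℝ} (hw : ∑ i, w i ≠ 0) (f : ι → ℝ) :
    wVar w f = (∑ j, ∑ k, w j * w k * (f j - f k) ^ 2) / (2 * (∑ i, w i) ^ 2) := by
  simp only [sq (f _ - f _), sum_sum_mul_mul_sub_mul_sub, wVar, wMean]
  field_simp

theorem wMean_mul_sub_wMean {a g : ι → ℝ} (ha : ∑ i, a i ≠ 0) (hag : ∑ i, a i * g i ≠ 0)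
    (f : ι → ℝ) :
    wMean (fun i => a i * g i) f - wMean a f =
      (∑ j, ∑ k, a j * a k * ((g j - g k) * (f j - f k))) /
        (2 * (∑ i, a i) * ∑ i, a i * g i) := by
  rw [sum_sum_mul_mul_sub_mul_sub]
  simp only [wMean, mul_assoc]
  field_simp

end WeightedStatistics

section ExponentialTilt

theorem exp_mul_sub_le_exp_sub_exp (u v : ℝ) : exp v * (u - v) ≤ exp u - exp v := by
  have := mul_le_mul_of_nonneg_left (add_one_le_exp (u - v)) (exp_pos v).le
  rw [mul_add, mul_one, ← exp_add, add_sub_cancel] at this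
  linarith

theorem exp_min_mul_sq_le (u v : ℝ) :
    exp (min u v) * (u - v) ^ 2 ≤ (exp u - exp v) * (u - v) := by
  rcases le_total v u with h | h
  · rw [min_eq_right h]
    nlinarith [mul_le_mul_of_nonneg_right (exp_mul_sub_le_exp_sub_exp u v) (sub_nonneg.2 h)]
  · rw [min_eq_left h]
    nlinarith [mul_le_mul_of_nonneg_right (exp_mul_sub_le_exp_sub_exp v u) (sub_nonneg.2 h)]

theorem exp_sub_exp_mul_le_exp_max_mul_sq (u v : ℝ) :
    (exp u - exp v) * (u - v) ≤ exp (max u v) * (u - v) ^ 2 := by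
  rcases le_total v u with h | h
  · rw [max_eq_left h]
    nlinarith [mul_le_mul_of_nonneg_right (exp_mul_sub_le_exp_sub_exp v u) (sub_nonneg.2 h)]
  · rw [max_eq_right h]
    nlinarith [mul_le_mul_of_nonneg_right (exp_mul_sub_le_exp_sub_exp u v) (sub_nonneg.2 h)]

variable {ι : Type*} [Fintype ι] {a x : ι → ℝ} {η : ℝ}

theorem sum_mul_exp_le (ha : ∀ i, 0 ≤ a i) {y : ℝ} (hy : ∀ i, x i ≤ y) :
    ∑ i, a i * exp (x i) ≤ (∑ i, a i) * exp y := by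
  rw [Finset.sum_mul]
  gcongr with i
  exacts [ha i, hy i]

theorem le_sum_mul_exp (ha : ∀ i, 0 ≤ a i) {y : ℝ} (hy : ∀ i, y ≤ x i) :
    (∑ i, a i) * exp y ≤ ∑ i, a i * exp (x i) := by
  rw [Finset.sum_mul]
  gcongr with i
  exacts [ha i, hy i]

theorem sum_mul_exp_pos (ha : ∀ i, 0 ≤ a i) (hA : 0 < ∑ i, a i) :
    0 < ∑ i, a i * exp (x i) := by
  obtain ⟨i, -, hi⟩ :=
    Finset.exists_lt_of_sum_lt (by simpa using hA : ∑ _ : ι, (0 : ℝ) < ∑ i, a i)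
  exact Finset.sum_pos' (fun i _ => mul_nonneg (ha i) (exp_pos _).le)
    ⟨i, Finset.mem_univ i, mul_pos hi (exp_pos _)⟩

variable (ha : ∀ i, 0 ≤ a i) (hA : 0 < ∑ i, a i) (hx : ∀ j k, x j - x k ≤ η)
include ha hA hx

theorem exp_neg_mul_wVar_le_wMean_tilt_sub :
    exp (-η) * wVar a x ≤ wMean (fun i => a i * exp (x i)) x - wMean a x := by
  have hC := sum_mul_exp_pos (x := x) ha hA
  rw [wVar_eq_sum_sum hA.ne', wMean_mul_sub_wMean hA.ne' hC.ne', mul_div_assoc',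
    div_le_div_iff₀ (by positivity) (by positivity)]
  set A := ∑ i, a i
  set C := ∑ i, a i * exp (x i)
  suffices exp (-η) * C * (∑ j, ∑ k, a j * a k * (x j - x k) ^ 2) ≤
      A * ∑ j, ∑ k, a j * a k * ((exp (x j) - exp (x k)) * (x j - x k)) by
    linarith [mul_le_mul_of_nonneg_left this (by positivity : (0 : ℝ) ≤ 2 * A)]
  simp only [Finset.mul_sum]
  refine Finset.sum_le_sum fun j _ => Finset.sum_le_sum fun k _ => ?_
  have hpair : exp (-η) * C ≤ A * exp (min (x j) (x k)) := by
    have := sum_mul_exp_le (x := x) ha (y := min (x j) (x k) + η) fun i => by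
      rcases min_choice (x j) (x k) with h | h <;> rw [h] <;> linarith [hx i j, hx i k]
    calc exp (-η) * C ≤ exp (-η) * (A * exp (min (x j) (x k) + η)) := by gcongr
      _ = A * exp (min (x j) (x k)) := by rw [exp_add, exp_neg]; field_simp
  have hajk : 0 ≤ a j * a k := mul_nonneg (ha j) (ha k)
  calc exp (-η) * C * (a j * a k * (x j - x k) ^ 2)
      ≤ A * exp (min (x j) (x k)) * (a j * a k * (x j - x k) ^ 2) := by gcongr
    _ = A * (a j * a k) * (exp (min (x j) (x k)) * (x j - x k) ^ 2) := by ring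
    _ ≤ A * (a j * a k) * ((exp (x j) - exp (x k)) * (x j - x k)) :=
      mul_le_mul_of_nonneg_left (exp_min_mul_sq_le _ _) (mul_nonneg hA.le hajk)
    _ = A * (a j * a k * ((exp (x j) - exp (x k)) * (x j - x k))) := by ring

theorem wMean_tilt_sub_le_exp_mul_wVar :
    wMean (fun i => a i * exp (x i)) x - wMean a x ≤ exp η * wVar a x := by
  have hC := sum_mul_exp_pos (x := x) ha hA
  rw [wVar_eq_sum_sum hA.ne', wMean_mul_sub_wMean hA.ne' hC.ne', mul_div_assoc',
    div_le_div_iff₀ (by positivity) (by positivity)]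
  set A := ∑ i, a i
  set C := ∑ i, a i * exp (x i)
  suffices A * (∑ j, ∑ k, a j * a k * ((exp (x j) - exp (x k)) * (x j - x k))) ≤
      exp η * C * ∑ j, ∑ k, a j * a k * (x j - x k) ^ 2 by
    linarith [mul_le_mul_of_nonneg_left this (by positivity : (0 : ℝ) ≤ 2 * A)]
  simp only [Finset.mul_sum]
  refine Finset.sum_le_sum fun j _ => Finset.sum_le_sum fun k _ => ?_
  have hpair : A * exp (max (x j) (x k)) ≤ exp η * C := by
    have := le_sum_mul_exp (x := x) ha (y := max (x j) (x k) - η) fun i => by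
      rcases max_choice (x j) (x k) with h | h <;> rw [h] <;> linarith [hx j i, hx k i]
    calc A * exp (max (x j) (x k)) = exp η * (A * exp (max (x j) (x k) - η)) := by
          rw [exp_sub]; field_simp
      _ ≤ exp η * C := by gcongr
  have hajk : 0 ≤ a j * a k := mul_nonneg (ha j) (ha k)
  calc A * (a j * a k * ((exp (x j) - exp (x k)) * (x j - x k)))
      = A * (a j * a k) * ((exp (x j) - exp (x k)) * (x j - x k)) := by ring
    _ ≤ A * (a j * a k) * (exp (max (x j) (x k)) * (x j - x k) ^ 2) :=
      mul_le_mul_of_nonneg_left (exp_sub_exp_mul_le_exp_max_mul_sq _ _) (mul_nonneg hA.le hajk)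
    _ = A * exp (max (x j) (x k)) * (a j * a k * (x j - x k) ^ 2) := by ring
    _ ≤ exp η * C * (a j * a k * (x j - x k) ^ 2) := by gcongr

theorem exp_neg_two_mul_wVar_le_wVar_tilt (f : ι → ℝ) :
    exp (-(2 * η)) * wVar a f ≤ wVar (fun i => a i * exp (x i)) f := by
  have hC := sum_mul_exp_pos (x := x) ha hA
  rw [wVar_eq_sum_sum hA.ne', wVar_eq_sum_sum hC.ne', mul_div_assoc',
    div_le_div_iff₀ (by positivity) (by positivity)]
  set A := ∑ i, a i
  set C := ∑ i, a i * exp (x i)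
  suffices exp (-(2 * η)) * C ^ 2 * (∑ j, ∑ k, a j * a k * (f j - f k) ^ 2) ≤
      A ^ 2 * ∑ j, ∑ k, a j * exp (x j) * (a k * exp (x k)) * (f j - f k) ^ 2 by
    linarith
  simp only [Finset.mul_sum]
  refine Finset.sum_le_sum fun j _ => Finset.sum_le_sum fun k _ => ?_
  have hpair : exp (-(2 * η)) * C ^ 2 ≤ A ^ 2 * (exp (x j) * exp (x k)) := by
    have hj := sum_mul_exp_le (x := x) ha (y := x j + η) fun i => by linarith [hx i j]
    have hk := sum_mul_exp_le (x := x) ha (y := x k + η) fun i => by linarith [hx i k]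
    calc exp (-(2 * η)) * C ^ 2
        ≤ exp (-(2 * η)) * ((A * exp (x j + η)) * (A * exp (x k + η))) := by
          rw [sq]; gcongr
      _ = A ^ 2 * (exp (x j) * exp (x k)) := by
          rw [exp_add, exp_add, exp_neg, two_mul, exp_add]; field_simp
  have hajk : 0 ≤ a j * a k * (f j - f k) ^ 2 := by have := ha j; have := ha k; positivity
  calc exp (-(2 * η)) * C ^ 2 * (a j * a k * (f j - f k) ^ 2)
      ≤ A ^ 2 * (exp (x j) * exp (x k)) * (a j * a k * (f j - f k) ^ 2) := by gcongr
    _ = A ^ 2 * (a j * exp (x j) * (a k * exp (x k)) * (f j - f k) ^ 2) := by ring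

theorem wVar_tilt_le_exp_two_mul_wVar (f : ι → ℝ) :
    wVar (fun i => a i * exp (x i)) f ≤ exp (2 * η) * wVar a f := by
  have hC := sum_mul_exp_pos (x := x) ha hA
  rw [wVar_eq_sum_sum hA.ne', wVar_eq_sum_sum hC.ne', mul_div_assoc',
    div_le_div_iff₀ (by positivity) (by positivity)]
  set A := ∑ i, a i
  set C := ∑ i, a i * exp (x i)
  suffices A ^ 2 * (∑ j, ∑ k, a j * exp (x j) * (a k * exp (x k)) * (f j - f k) ^ 2) ≤
      exp (2 * η) * C ^ 2 * ∑ j, ∑ k, a j * a k * (f j - f k) ^ 2 by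
    linarith
  simp only [Finset.mul_sum]
  refine Finset.sum_le_sum fun j _ => Finset.sum_le_sum fun k _ => ?_
  have hpair : A ^ 2 * (exp (x j) * exp (x k)) ≤ exp (2 * η) * C ^ 2 := by
    have hj := le_sum_mul_exp (x := x) ha (y := x j - η) fun i => by linarith [hx j i]
    have hk := le_sum_mul_exp (x := x) ha (y := x k - η) fun i => by linarith [hx k i]
    calc A ^ 2 * (exp (x j) * exp (x k))
        = exp (2 * η) * ((A * exp (x j - η)) * (A * exp (x k - η))) := by
          rw [exp_sub, exp_sub, two_mul, exp_add]; field_simp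
      _ ≤ exp (2 * η) * C ^ 2 := by
          rw [sq]; gcongr
  have hajk : 0 ≤ a j * a k * (f j - f k) ^ 2 := by have := ha j; have := ha k; positivity
  calc A ^ 2 * (a j * exp (x j) * (a k * exp (x k)) * (f j - f k) ^ 2)
      = A ^ 2 * (exp (x j) * exp (x k)) * (a j * a k * (f j - f k) ^ 2) := by ring
    _ ≤ exp (2 * η) * C ^ 2 * (a j * a k * (f j - f k) ^ 2) := by gcongr

end ExponentialTilt

section QuadForm

open Matrix

variable {d : ℕ}

theorem quadForm_eq_dotProduct (M : Matrix (Fin d) (Fin d) ℝ) (y : EuclideanSpace ℝ (Fin d)) :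
    quadForm M y = WithLp.ofLp y ⬝ᵥ (M *ᵥ WithLp.ofLp y) := by
  simp [quadForm, dotProduct, mulVec, Finset.mul_sum, mul_assoc]

theorem quadForm_sub (M N : Matrix (Fin d) (Fin d) ℝ) (y : EuclideanSpace ℝ (Fin d)) :
    quadForm (M - N) y = quadForm M y - quadForm N y := by
  simp [quadForm_eq_dotProduct, sub_mulVec]

theorem quadForm_smul (c : ℝ) (M : Matrix (Fin d) (Fin d) ℝ) (y : EuclideanSpace ℝ (Fin d)) :
    quadForm (c • M) y = c * quadForm M y := by
  simp [quadForm_eq_dotProduct, smul_mulVec]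

theorem quadForm_sum {ι : Type*} (s : Finset ι) (M : ι → Matrix (Fin d) (Fin d) ℝ)
    (y : EuclideanSpace ℝ (Fin d)) :
    quadForm (∑ i ∈ s, M i) y = ∑ i ∈ s, quadForm (M i) y := by
  simp [quadForm_eq_dotProduct, sum_mulVec, dotProduct_sum]

theorem quadForm_zero (y : EuclideanSpace ℝ (Fin d)) : quadForm 0 y = 0 := by
  simp [quadForm]

theorem quadForm_outer (v y : EuclideanSpace ℝ (Fin d)) :
    quadForm (of fun k l => v k * v l) y = ⟪y, v⟫ ^ 2 := by
  simp only [quadForm, of_apply, sq, PiLp.inner_apply, RCLike.inner_apply, conj_trivial,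
    Finset.sum_mul_sum]
  exact Finset.sum_congr rfl fun k _ => Finset.sum_congr rfl fun l _ => by ring

theorem Matrix.posSemidef_sub_of_quadForm_le {M N : Matrix (Fin d) (Fin d) ℝ}
    (hM : M.IsHermitian) (hN : N.IsHermitian) (h : ∀ y, quadForm N y ≤ quadForm M y) :
    (M - N).PosSemidef := by
  refine posSemidef_iff_dotProduct_mulVec.2 ⟨hM.sub hN, fun y => ?_⟩
  have := h (WithLp.toLp 2 y)
  simpa [quadForm_eq_dotProduct, sub_mulVec] using this

end QuadForm

namespace SurvData

variable {n d : ℕ}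

theorem covBound.abs_inner_sub_le {CZ : ℝ} {D : SurvData n d} (hZ : D.covBound CZ)
    (b : EuclideanSpace ℝ (Fin d)) {t : ℝ} (ht : t ∈ Set.Icc (0 : ℝ) 1) (i j : Fin n) :
    |⟪b, D.Z i t - D.Z j t⟫| ≤ 2 * CZ * ‖b‖ :=
  calc |⟪b, D.Z i t - D.Z j t⟫| ≤ ‖b‖ * ‖D.Z i t - D.Z j t‖ := abs_real_inner_le_norm _ _
    _ ≤ ‖b‖ * (‖D.Z i t‖ + ‖D.Z j t‖) := by gcongr; exact norm_sub_le _ _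
    _ ≤ ‖b‖ * (CZ + CZ) := by gcongr <;> exact hZ _ t ht
    _ = 2 * CZ * ‖b‖ := by ring

variable (D : SurvData n d)

def riskWeight (β : EuclideanSpace ℝ (Fin d)) (t : ℝ) (j : Fin n) : ℝ :=
  if t ≤ D.T j then exp ⟪β, D.Z j t⟫ else 0

def eventAvg (f : Fin n → ℝ) : ℝ := (n : ℝ)⁻¹ * ∑ i, if D.Δ i then f i else 0

theorem riskWeight_nonneg (β : EuclideanSpace ℝ (Fin d)) (t : ℝ) (j : Fin n) :
    0 ≤ D.riskWeight β t j := by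
  unfold riskWeight; split_ifs <;> positivity

theorem sum_riskWeight_pos (β : EuclideanSpace ℝ (Fin d)) (i : Fin n) :
    0 < ∑ j, D.riskWeight β (D.T i) j :=
  Finset.sum_pos' (fun j _ => D.riskWeight_nonneg β _ j)
    ⟨i, Finset.mem_univ i, by simp [riskWeight, exp_pos]⟩

theorem riskWeight_add (β b : EuclideanSpace ℝ (Fin d)) (t : ℝ) :
    D.riskWeight (β + b) t = fun j => D.riskWeight β t j * exp ⟪b, D.Z j t⟫ := by
  ext j; unfold riskWeight; split_ifs <;> simp [inner_add_left, exp_add]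

theorem inv_S0_mul_eq_wMean (β : EuclideanSpace ℝ (Fin d)) (t : ℝ) (f : Fin n → ℝ) :
    (D.S0 β t)⁻¹ * ((n : ℝ)⁻¹ * ∑ j, D.riskWeight β t j * f j) =
      wMean (D.riskWeight β t) f := by
  rcases n.eq_zero_or_pos with rfl | hn
  · simp [wMean]
  · have : (n : ℝ) ≠ 0 := by positivity
    simp only [S0, wMean]
    field_simp
    rfl

theorem inner_Zbar (β u : EuclideanSpace ℝ (Fin d)) (t : ℝ) :
    ⟪u, D.Zbar β t⟫ = wMean (D.riskWeight β t) fun j => ⟪u, D.Z j t⟫ := by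
  rw [← inv_S0_mul_eq_wMean, Zbar, real_inner_smul_right, S1, real_inner_smul_right, inner_sum]
  congr 2
  refine Finset.sum_congr rfl fun j _ => ?_
  unfold riskWeight; split_ifs <;> simp [real_inner_smul_right]

theorem quadForm_Vmat (β y : EuclideanSpace ℝ (Fin d)) (t : ℝ) :
    quadForm (D.Vmat β t) y = wVar (D.riskWeight β t) fun j => ⟪y, D.Z j t⟫ := by
  have hS2 : quadForm (D.S2mat β t) y =
      (n : ℝ)⁻¹ * ∑ j, D.riskWeight β t j * ⟪y, D.Z j t⟫ ^ 2 := by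
    rw [S2mat, quadForm_smul, quadForm_sum]
    congr 1
    refine Finset.sum_congr rfl fun j _ => ?_
    unfold riskWeight
    split_ifs
    · rw [quadForm_smul, quadForm_outer]
    · rw [quadForm_zero, zero_mul]
  rw [Vmat, quadForm_sub, quadForm_smul, quadForm_outer, hS2, inner_Zbar, inv_S0_mul_eq_wMean]
  rfl

theorem inner_score_sub (β β' b : EuclideanSpace ℝ (Fin d)) :
    ⟪b, D.score β - D.score β'⟫ =
      D.eventAvg fun i => ⟪b, D.Zbar β' (D.T i)⟫ - ⟪b, D.Zbar β (D.T i)⟫ := by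
  rw [score, score, ← smul_sub, ← Finset.sum_sub_distrib, real_inner_smul_right, inner_sum,
    eventAvg]
  congr 1
  refine Finset.sum_congr rfl fun i _ => ?_
  split_ifs <;> simp [inner_sub_right]

theorem quadForm_infoMat (β y : EuclideanSpace ℝ (Fin d)) :
    quadForm (D.infoMat β) y = D.eventAvg fun i => quadForm (D.Vmat β (D.T i)) y := by
  rw [infoMat, quadForm_smul, quadForm_sum, eventAvg]
  congr 1
  refine Finset.sum_congr rfl fun i _ => ?_
  split_ifs <;> simp [quadForm_zero]

theorem mul_eventAvg (c : ℝ) (f : Fin n → ℝ) :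
    c * D.eventAvg f = D.eventAvg fun i => c * f i := by
  simp only [eventAvg, Finset.mul_sum, mul_ite, mul_zero]
  ring_nf

theorem eventAvg_mono {f g : Fin n → ℝ} (h : ∀ i, D.Δ i → f i ≤ g i) :
    D.eventAvg f ≤ D.eventAvg g := by
  unfold eventAvg
  gcongr with i
  split_ifs with hi
  exacts [h i hi, le_rfl]

theorem isHermitian_infoMat (β : EuclideanSpace ℝ (Fin d)) : (D.infoMat β).IsHermitian :=
  Matrix.IsHermitian.ext fun k l => by
    simp [infoMat, Vmat, S2mat, Matrix.sum_apply, Matrix.ite_apply, mul_comm]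


variable {β b : EuclideanSpace ℝ (Fin d)} {t η : ℝ}

variable (hA : 0 < ∑ j, D.riskWeight β t j) (hx : ∀ j k, ⟪b, D.Z j t⟫ - ⟪b, D.Z k t⟫ ≤ η)
include hA hx

theorem exp_neg_mul_quadForm_Vmat_le :
    exp (-η) * quadForm (D.Vmat β t) b ≤ ⟪b, D.Zbar (β + b) t⟫ - ⟪b, D.Zbar β t⟫ := by
  rw [quadForm_Vmat, inner_Zbar, inner_Zbar, riskWeight_add]
  exact exp_neg_mul_wVar_le_wMean_tilt_sub (D.riskWeight_nonneg β t) hA hx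

theorem inner_Zbar_add_sub_le :
    ⟪b, D.Zbar (β + b) t⟫ - ⟪b, D.Zbar β t⟫ ≤ exp η * quadForm (D.Vmat β t) b := by
  rw [quadForm_Vmat, inner_Zbar, inner_Zbar, riskWeight_add]
  exact wMean_tilt_sub_le_exp_mul_wVar (D.riskWeight_nonneg β t) hA hx

theorem exp_neg_two_mul_quadForm_Vmat_le (y : EuclideanSpace ℝ (Fin d)) :
    exp (-(2 * η)) * quadForm (D.Vmat β t) y ≤ quadForm (D.Vmat (β + b) t) y := by
  rw [quadForm_Vmat, quadForm_Vmat, riskWeight_add]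
  exact exp_neg_two_mul_wVar_le_wVar_tilt (D.riskWeight_nonneg β t) hA hx _

theorem quadForm_Vmat_add_le (y : EuclideanSpace ℝ (Fin d)) :
    quadForm (D.Vmat (β + b) t) y ≤ exp (2 * η) * quadForm (D.Vmat β t) y := by
  rw [quadForm_Vmat, quadForm_Vmat, riskWeight_add]
  exact wVar_tilt_le_exp_two_mul_wVar (D.riskWeight_nonneg β t) hA hx _

end SurvData

theorem cox_lemma_huang_general (CZ : ℝ) (hCZ : 0 < CZ) {n d : ℕ}
    (D : SurvData n d) (hT : D.valid) (hZ : D.covBound CZ)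
    (β b : EuclideanSpace ℝ (Fin d))
    (η : ℝ)
    (hη : η = sSup {x : ℝ | ∃ t ∈ Set.Icc (0 : ℝ) 1, ∃ i j : Fin n,
      x = |⟪b, D.Z i t - D.Z j t⟫|}) :
    η ≤ 2 * CZ * ‖b‖ ∧
    Real.exp (-η) * quadForm (D.infoMat β) b ≤ ⟪b, D.score β - D.score (β + b)⟫ ∧
    ⟪b, D.score β - D.score (β + b)⟫ ≤ Real.exp η * quadForm (D.infoMat β) b ∧
    (D.infoMat (β + b) - Real.exp (-(2 * η)) • D.infoMat β).PosSemidef ∧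
    (Real.exp (2 * η) • D.infoMat β - D.infoMat (β + b)).PosSemidef := by
  have hbdd : ∀ x ∈ {x : ℝ | ∃ t ∈ Set.Icc (0 : ℝ) 1, ∃ i j : Fin n,
      x = |⟪b, D.Z i t - D.Z j t⟫|}, x ≤ 2 * CZ * ‖b‖ := by
    rintro _ ⟨t, ht, i, j, rfl⟩
    exact hZ.abs_inner_sub_le b ht i j
  have hx (i j k : Fin n) : ⟪b, D.Z j (D.T i)⟫ - ⟪b, D.Z k (D.T i)⟫ ≤ η := by
    rw [← inner_sub_right, hη]
    exact (le_abs_self _).trans (le_csSup ⟨_, hbdd⟩ ⟨_, hT i, j, k, rfl⟩)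
  have hA := D.sum_riskWeight_pos β
  have hH := D.isHermitian_infoMat
  refine ⟨hη ▸ Real.sSup_le hbdd (by positivity), ?_, ?_, ?_, ?_⟩
  · rw [D.inner_score_sub, D.quadForm_infoMat, D.mul_eventAvg]
    exact D.eventAvg_mono fun i _ => D.exp_neg_mul_quadForm_Vmat_le (hA i) (hx i)
  · rw [D.inner_score_sub, D.quadForm_infoMat, D.mul_eventAvg]
    exact D.eventAvg_mono fun i _ => D.inner_Zbar_add_sub_le (hA i) (hx i)
  · refine Matrix.posSemidef_sub_of_quadForm_le (hH _) ((hH β).smul (.all _)) fun y => ?_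
    rw [quadForm_smul, D.quadForm_infoMat, D.quadForm_infoMat, D.mul_eventAvg]
    exact D.eventAvg_mono fun i _ => D.exp_neg_two_mul_quadForm_Vmat_le (hA i) (hx i) y
  · refine Matrix.posSemidef_sub_of_quadForm_le ((hH β).smul (.all _)) (hH _) fun y => ?_
    rw [quadForm_smul, D.quadForm_infoMat, D.quadForm_infoMat, D.mul_eventAvg]
    exact D.eventAvg_mono fun i _ => D.quadForm_Vmat_add_le (hA i) (hx i) y

/-- Lemma B.3 (Huang et al.): with
`η_b = sup_{t ∈ [0,1]} max_{i,j} |bᵀ(Z_i(t) − Z_j(t))|` (finite, at most `2 C_Z ‖b‖₂`),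
`e^{−η_b} bᵀ H(β) b ≤ bᵀ(ℓ̇(β) − ℓ̇(β+b)) ≤ e^{η_b} bᵀ H(β) b` and, in the Loewner
order, `e^{−2η_b} H(β) ⪯ H(β+b) ⪯ e^{2η_b} H(β)`. -/
theorem cox_lemma_huang (CZ : ℝ) (hCZ : 0 < CZ) {n d : ℕ} (hn : 2 ≤ n)
    (D : SurvData n d) (hT : D.valid) (hZ : D.covBound CZ)
    (β b : EuclideanSpace ℝ (Fin d))
    (η : ℝ)
    (hη : η = sSup {x : ℝ | ∃ t ∈ Set.Icc (0 : ℝ) 1, ∃ i j : Fin n,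
      x = |⟪b, D.Z i t - D.Z j t⟫|}) :
    η ≤ 2 * CZ * ‖b‖ ∧
    Real.exp (-η) * quadForm (D.infoMat β) b ≤ ⟪b, D.score β - D.score (β + b)⟫ ∧
    ⟪b, D.score β - D.score (β + b)⟫ ≤ Real.exp η * quadForm (D.infoMat β) b ∧
    (D.infoMat (β + b) - Real.exp (-(2 * η)) • D.infoMat β).PosSemidef ∧
    (Real.exp (2 * η) • D.infoMat β - D.infoMat (β + b)).PosSemidef :=
  cox_lemma_huang_general CZ hCZ D hT hZ β b η hη
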